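/- Let R be a Frobenius algebra with form ⟨,⟩ and Nakayama automorphism ν. For f ∈ C^n(R)^ν (i.e. f^ν = f), the operator Δ defined via the Frobenius form maps C^n(R)^ν into C^{n-1}(R)^ν and satisfies δ_{n-1}(Δf) = −Δ(δ_n f); hence Δ induces a well-defined map HH^n(R)^{ν↑} → HH^{n-1}(R)^{ν↑}. -/

import Mathlib

open Finset

variable {k R : Type*}

/-- The argument tuple for the `i`-th inner face: multiply `a i` and `a (i+1)`. -/
def mergeAt [Ring R] {n : ℕ} (a : Fin (n + 1) → R) (i : Fin n) : Fin n → R :=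
  fun j =>
    if j.val < i.val then a j.castSucc
    else if j.val = i.val then a j.castSucc * a j.succ
    else a j.succ

/-- The Hochschild differential `δ_n` on (raw) Hochschild cochains. -/
def hdiff [Ring R] {n : ℕ} (f : (Fin n → R) → R) : (Fin (n + 1) → R) → R :=
  fun a =>
    a 0 * f (fun j => a j.succ)
      + (∑ i : Fin n, ((-1 : R) ^ (i.val + 1)) * f (mergeAt a i))
      + ((-1 : R) ^ (n + 1)) * (f (fun j => a j.castSucc) * a (Fin.last n))

/-- The twist `f ↦ f^σ` of a cochain by an algebra automorphism `σ`. -/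
def twist [CommRing k] [Ring R] [Algebra k R] {n : ℕ} (σ : R ≃ₐ[k] R)
    (f : (Fin n → R) → R) : (Fin n → R) → R :=
  fun a => σ.symm (f (fun j => σ (a j)))

/-- The cyclic argument arrangement `a_i ⊗ ⋯ ⊗ a_{n-1} ⊗ x ⊗ ν a_1 ⊗ ⋯ ⊗ ν a_{i-1}`
(0-based: shift by `i`, insert `x` after the tail of `a`, apply `ν` to the wrapped part). -/
def cycArr [Ring R] {n : ℕ} (ν : R → R) (a : Fin n → R) (x : R) (i : Fin (n + 1)) :
    Fin (n + 1) → R :=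
  fun j =>
    if h1 : i.val + j.val < n then a ⟨i.val + j.val, h1⟩
    else if h2 : i.val + j.val = n then x
    else ν (a ⟨i.val + j.val - (n + 1), by
      have := i.isLt; have := j.isLt; omega⟩)

/-- `Df` is the Tradler operator `Δ f` of the (n+1)-cochain `f`, characterized via the
Frobenius form `⟨a,b⟩ = ε(ab)`:
`⟨Δf(a_1 ⊗ ⋯ ⊗ a_{n-1}), a_n⟩ = Σ_i (−1)^{i(n-1)} ⟨f(a_i ⊗ ⋯ ⊗ a_n ⊗ ν a_1 ⊗ ⋯ ⊗ ν a_{i-1}), 1⟩`. -/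
def IsDeltaOf [CommRing k] [Ring R] [Algebra k R] {n : ℕ} (ε : R →ₗ[k] k) (ν : R → R)
    (f : (Fin (n + 1) → R) → R) (Df : (Fin n → R) → R) : Prop :=
  ∀ (a : Fin n → R) (x : R),
    ε (Df a * x)
      = ∑ i : Fin (n + 1), ((-1 : k) ^ ((i.val + 1) * n)) * ε (f (cycArr ν a x i))


/-!
Since `ε` is nondegenerate, cochains are compared through `y ↦ ε (· * y)`, and then everything
is a statement about the cyclic sums defining `Δ`. Twisting by `ν` commutes with those sums (`ν`
is multiplicative and preserves `ε`), so `Δ (f^ν) = (Δ f)^ν`; hence `Δ` of an invariant cochain is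
invariant.

For the differential, `ε (Δ(δf)(a) * y)` is a sum over the cyclic arrangements of
`(a₀, …, aₙ, y)` of the faces of `δf`. The outer faces telescope: consecutive arrangements share
their middle block and `ε (u * w) = ε (w * ν u)`, which leaves `ε (f^ν(a) * y) - ε (f(a) * y)`.
An inner face multiplies two cyclic neighbours, and the same term occurs with the opposite sign
in `ε (δ(Δf)(a) * y)` once every `Δf` there is expanded. Thus `δΔ + Δδ = (·)^ν - id`, which
vanishes on invariant cochains.
-/

theorem neg_one_pow_mul_neg_one_pow_mul {M : Type*} [Ring M] {a b c d : ℕ}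
    (h : Odd (a + b + c + d)) (z : M) :
    (-1 : M) ^ a * ((-1) ^ b * z) = -((-1) ^ c * ((-1) ^ d * z)) := by
  rw [← mul_assoc, ← mul_assoc, ← pow_add, ← pow_add, ← neg_mul]
  congr 1
  calc (-1 : M) ^ (a + b) = (-1) ^ (a + b) * ((-1) ^ 2) ^ (c + d) := by simp
    _ = (-1) ^ (a + b + c + d) * (-1) ^ (c + d) := by
      rw [← pow_mul, ← pow_add, ← pow_add]; congr 1; ring
    _ = -(-1) ^ (c + d) := by rw [h.neg_one_pow, neg_one_mul]

theorem Fin.sum_add_sum_eq_of_castSucc_add_succ {M : Type*} [AddCommGroup M] {m : ℕ}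
    (A B : Fin (m + 1) → M) (h : ∀ i : Fin m, A i.castSucc + B i.succ = 0) :
    ∑ i, A i + ∑ i, B i = A (Fin.last m) + B 0 := by
  rw [Fin.sum_univ_castSucc A, Fin.sum_univ_succ B]
  calc _ = ∑ i : Fin m, (A i.castSucc + B i.succ) + (A (Fin.last m) + B 0) := by
        rw [sum_add_distrib]; abel
    _ = _ := by rw [sum_eq_zero fun i _ => h i, zero_add]

section CyclicArrangement

variable [Ring R] {n : ℕ} (ν : R → R)

theorem cycArr_congr (a : Fin n → R) (x : R) {i j i' j' : Fin (n + 1)}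
    (h : i.val + j.val = i'.val + j'.val) : cycArr ν a x i j = cycArr ν a x i' j' := by
  have fin_congr : ∀ {s t : ℕ} (hs : s < n) (ht : t < n), s = t → a ⟨s, hs⟩ = a ⟨t, ht⟩ := by
    rintro s t hs ht rfl; rfl
  simp only [cycArr]
  split_ifs <;>
    first
      | rfl
      | omega
      | exact fin_congr _ _ (by omega)
      | exact congrArg ν (fin_congr _ _ (by omega))

theorem cycArr_map (a : Fin n → R) (x : R) (i : Fin (n + 1)) :
    cycArr ν (fun j => ν (a j)) (ν x) i = fun j => ν (cycArr ν a x i j) := by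
  funext j
  simp only [cycArr]
  split_ifs <;> rfl

theorem cycArr_castSucc_zero (a : Fin n → R) (x : R) (i : Fin n) :
    cycArr ν a x i.castSucc 0 = a i := by
  simp [cycArr]

theorem cycArr_succ_last (a : Fin n → R) (x : R) (i : Fin n) :
    cycArr ν a x i.succ (Fin.last n) = ν (a i) := by
  simp only [cycArr, Fin.val_succ, Fin.val_last]
  rw [dif_neg (by omega), dif_neg (by omega)]
  congr 2
  ext; simp; omega

theorem cycArr_last_zero (a : Fin n → R) (x : R) : cycArr ν a x (Fin.last n) 0 = x := by
  simp [cycArr]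

theorem cycArr_zero_last (a : Fin n → R) (x : R) : cycArr ν a x 0 (Fin.last n) = x := by
  simp [cycArr]

theorem cycArr_last_succ (a : Fin n → R) (x : R) :
    (fun j : Fin n => cycArr ν a x (Fin.last n) j.succ) = fun j => ν (a j) := by
  funext j
  simp only [cycArr, Fin.val_succ, Fin.val_last]
  rw [dif_neg (by omega), dif_neg (by omega)]
  congr 2
  ext; simp; omega

theorem cycArr_zero_castSucc (a : Fin n → R) (x : R) :
    (fun j : Fin n => cycArr ν a x 0 j.castSucc) = a := by
  funext j
  simp [cycArr]

end CyclicArrangement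

section MergeCyclicArrangement

variable [Ring R] {n : ℕ} (ν : R → R) (a : Fin (n + 1) → R) (x : R) {v q : Fin (n + 1)}

theorem mergeAt_cycArr_castSucc_inner (p : Fin n) (h : v.val + q.val = p.val) :
    mergeAt (cycArr ν a x v.castSucc) q = cycArr ν (mergeAt a p) x v := by
  funext j
  simp only [mergeAt, cycArr, Fin.val_castSucc, Fin.val_succ]
  split_ifs <;> first | rfl | omega | (congr!; simp; omega)

theorem mergeAt_cycArr_castSucc_last (h : v.val + q.val = n) :
    mergeAt (cycArr ν a x v.castSucc) q
      = cycArr ν (fun j => a j.castSucc) (a (Fin.last n) * x) v := by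
  funext j
  simp only [mergeAt, cycArr, Fin.val_castSucc, Fin.val_succ]
  split_ifs <;> first | rfl | omega | (congr! <;> simp <;> omega)

theorem mergeAt_cycArr_succ_first (h : v.val + q.val = n) :
    mergeAt (cycArr ν a x v.succ) q = cycArr ν (fun j => a j.succ) (x * ν (a 0)) v := by
  funext j
  simp only [mergeAt, cycArr, Fin.val_castSucc, Fin.val_succ]
  split_ifs <;> first | rfl | omega | (congr!; simp; omega)

theorem mergeAt_cycArr_succ_inner (hν : ∀ r s : R, ν (r * s) = ν r * ν s) (p : Fin n)
    (h : v.val + q.val = n + 1 + p.val) :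
    mergeAt (cycArr ν a x v.succ) q = cycArr ν (mergeAt a p) x v := by
  funext j
  simp only [mergeAt, cycArr, Fin.val_castSucc, Fin.val_succ]
  split_ifs <;>
    first
      | rfl
      | omega
      | (congr! <;> simp <;> omega)
      | (rw [hν]; congr! <;> simp <;> omega)

end MergeCyclicArrangement

/-- The inner face `q` of the `i`-th arrangement multiplies the cyclic neighbours at position
`i + q`. This matches it with the term of `hdiffTerm` containing the same product: a face of `a`
at arrangement `i` (`i + q < n`) or `i - 1` (`i + q ≥ n + 2`), or `a n * y` (`i + q = n`), or
`y * ν (a 0)` (`i + q = n + 1`). -/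
def innerFaceEquiv (n : ℕ) :
    Fin (n + 1) ⊕ Fin (n + 1) ⊕ Fin n × Fin (n + 1) ≃ Fin (n + 2) × Fin (n + 1) where
  toFun
    | .inl v => (v.succ, ⟨n - v.val, by omega⟩)
    | .inr (.inl v) => (v.castSucc, ⟨n - v.val, by omega⟩)
    | .inr (.inr (p, v)) =>
      if h : v.val ≤ p.val then (v.castSucc, ⟨p.val - v.val, by omega⟩)
      else (v.succ, ⟨n + 1 + p.val - v.val, by omega⟩)
  invFun
    | (i, q) =>
      if h : i.val + q.val < n then .inr (.inr (⟨i.val + q.val, h⟩, ⟨i.val, by omega⟩))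
      else if h' : i.val + q.val = n then .inr (.inl ⟨i.val, by omega⟩)
      else if h'' : i.val + q.val = n + 1 then .inl ⟨i.val - 1, by omega⟩
      else .inr (.inr (⟨i.val + q.val - (n + 2), by omega⟩, ⟨i.val - 1, by omega⟩))
  left_inv := by
    rintro (v | v | ⟨p, v⟩)
    · simp only [Fin.val_succ]
      split_ifs <;> first | omega | simp
    · simp only [Fin.val_castSucc]
      split_ifs <;> first | omega | simp
    · by_cases h : v.val ≤ p.val
      · simp only [h, ↓reduceDIte, Fin.val_castSucc]
        split_ifs <;> first | omega | simp [Fin.ext_iff]; omega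
      · simp only [h, ↓reduceDIte, Fin.val_succ]
        split_ifs <;> first | omega | simp [Fin.ext_iff]; omega
  right_inv := by
    rintro ⟨i, q⟩
    dsimp only
    split_ifs <;> dsimp only
    · rw [dif_pos (by omega)]; ext <;> simp
    · ext <;> simp; omega
    · ext <;> simp <;> omega
    · rw [dif_neg (by omega)]; ext <;> simp <;> omega

section CyclicSum

variable [Ring k] [Ring R] (ν : R → R)

def cycSum {m : ℕ} (φ : (Fin (m + 1) → R) → k) (a : Fin m → R) (x : R) : k :=
  ∑ i : Fin (m + 1), (-1 : k) ^ ((i.val + 1) * m) * φ (cycArr ν a x i)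

theorem cycSum_add {m : ℕ} (φ ψ : (Fin (m + 1) → R) → k) (a : Fin m → R) (x : R) :
    cycSum ν (fun b => φ b + ψ b) a x = cycSum ν φ a x + cycSum ν ψ a x := by
  simp only [cycSum, mul_add, sum_add_distrib]

variable {n : ℕ}

def hdiffTerm (φ : (Fin (n + 1) → R) → k) (a : Fin (n + 1) → R) (y : R) :
    Fin (n + 1) ⊕ Fin (n + 1) ⊕ Fin n × Fin (n + 1) → k
  | .inl v =>
    (-1) ^ 0 * ((-1) ^ ((v.val + 1) * n) * φ (cycArr ν (fun j => a j.succ) (y * ν (a 0)) v))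
  | .inr (.inl v) =>
    (-1) ^ (n + 1) * ((-1) ^ ((v.val + 1) * n) *
      φ (cycArr ν (fun j => a j.castSucc) (a (Fin.last n) * y) v))
  | .inr (.inr (p, v)) =>
    (-1) ^ (p.val + 1) * ((-1) ^ ((v.val + 1) * n) * φ (cycArr ν (mergeAt a p) y v))

theorem cycSum_inner_faces (hν : ∀ r s : R, ν (r * s) = ν r * ν s)
    (φ : (Fin (n + 1) → R) → k) (a : Fin (n + 1) → R) (y : R) :
    cycSum ν (fun b => ∑ q : Fin (n + 1), (-1) ^ (q.val + 1) * φ (mergeAt b q)) a y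
      = -∑ w, hdiffTerm ν φ a y w := by
  simp only [cycSum, mul_sum]
  rw [← Fintype.sum_prod_type', ← sum_neg_distrib, eq_comm]
  refine Fintype.sum_equiv (innerFaceEquiv n) _ _ ?_
  rintro (v | v | ⟨p, v⟩) <;> simp only [innerFaceEquiv, Equiv.coe_fn_mk, hdiffTerm]
  · rw [mergeAt_cycArr_succ_first ν a y (by simp; omega)]
    refine (neg_one_pow_mul_neg_one_pow_mul ?_ _).symm
    simp [← Nat.not_even_iff_odd, Nat.even_add, Nat.even_mul, Nat.even_add_one,
      Nat.even_sub v.is_le]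
    tauto
  · rw [mergeAt_cycArr_castSucc_last ν a y (by simp; omega)]
    refine (neg_one_pow_mul_neg_one_pow_mul ?_ _).symm
    simp [← Nat.not_even_iff_odd, Nat.even_add, Nat.even_mul, Nat.even_add_one,
      Nat.even_sub v.is_le]
    tauto
  · split_ifs with h
    · rw [mergeAt_cycArr_castSucc_inner ν a y p (by simp; omega)]
      refine (neg_one_pow_mul_neg_one_pow_mul ?_ _).symm
      simp [← Nat.not_even_iff_odd, Nat.even_add, Nat.even_mul, Nat.even_add_one,
        Nat.even_sub h]
      tauto
    · rw [mergeAt_cycArr_succ_inner ν a y hν p (by simp; omega)]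
      refine (neg_one_pow_mul_neg_one_pow_mul ?_ _).symm
      simp [← Nat.not_even_iff_odd, Nat.even_add, Nat.even_mul, Nat.even_add_one,
        Nat.even_sub (by omega : v.val ≤ n + 1 + p.val)]
      tauto

end CyclicSum

section FrobeniusForm

variable [CommRing k] [Ring R] [Algebra k R] (ε : R →ₗ[k] k)

theorem eps_neg_one_pow_mul (m : ℕ) (w : R) : ε ((-1 : R) ^ m * w) = (-1 : k) ^ m * ε w := by
  rw [show (-1 : R) ^ m * w = (-1 : k) ^ m • w by simp [Algebra.smul_def], map_smul, smul_eq_mul]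

theorem eq_of_forall_eps_mul_eq (hnd : ∀ a : R, (∀ b : R, ε (a * b) = 0) → a = 0) {u v : R}
    (h : ∀ y, ε (u * y) = ε (v * y)) : u = v :=
  sub_eq_zero.1 (hnd _ fun y => by rw [sub_mul, map_sub, h, sub_self])

variable {n : ℕ}

theorem IsDeltaOf.unique (hnd : ∀ a : R, (∀ b : R, ε (a * b) = 0) → a = 0) {ν : R → R}
    {f : (Fin (n + 1) → R) → R} {D₁ D₂ : (Fin n → R) → R}
    (h₁ : IsDeltaOf ε ν f D₁) (h₂ : IsDeltaOf ε ν f D₂) : D₁ = D₂ :=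
  funext fun a => eq_of_forall_eps_mul_eq ε hnd fun y => (h₁ a y).trans (h₂ a y).symm

theorem isDeltaOf_twist (ν : R ≃ₐ[k] R) (hν : ∀ r s : R, ε (r * s) = ε (s * ν r))
    {f : (Fin (n + 1) → R) → R} {Df : (Fin n → R) → R} (h : IsDeltaOf ε ν f Df) :
    IsDeltaOf ε ν (twist ν f) (twist ν Df) := by
  have hε : ∀ r, ε (ν r) = ε r := fun r => by simpa using (hν r 1).symm
  intro a x
  calc ε (twist ν Df a * x) = ε (Df (fun j => ν (a j)) * ν x) := by
        rw [twist, hν, ν.apply_symm_apply, ← hν]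
    _ = _ := h _ _
    _ = _ := by
      refine sum_congr rfl fun i _ => ?_
      rw [cycArr_map, twist, ← hε (ν.symm _), ν.apply_symm_apply]

theorem eps_hdiff (g : (Fin (n + 1) → R) → R) (b : Fin (n + 2) → R) :
    ε (hdiff g b)
      = (ε (b 0 * g (fun j => b j.succ))
          + (-1) ^ (n + 1 + 1) * ε (g (fun j => b j.castSucc) * b (Fin.last (n + 1))))
        + ∑ q : Fin (n + 1), (-1) ^ (q.val + 1) * ε (g (mergeAt b q)) := by
  simp only [hdiff, map_add, map_sum, eps_neg_one_pow_mul]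
  ring

theorem eps_hdiff_mul (ν : R → R) (hν : ∀ r s : R, ε (r * s) = ε (s * ν r))
    {g : (Fin (n + 1) → R) → R} {D : (Fin n → R) → R}
    (hD : IsDeltaOf ε ν g D) (a : Fin (n + 1) → R) (y : R) :
    ε (hdiff D a * y) = ∑ w, hdiffTerm ν (fun b => ε (g b)) a y w := by
  have hD' : ∀ b x, ε (D b * x) = cycSum ν (fun b => ε (g b)) b x := hD
  simp only [hdiff, add_mul, sum_mul, map_add, map_sum, mul_assoc, eps_neg_one_pow_mul]
  rw [hν (a 0), mul_assoc]
  simp only [hD', Fintype.sum_sum_type, Fintype.sum_prod_type, hdiffTerm, cycSum, mul_sum,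
    pow_zero, one_mul]
  abel

theorem cycSum_outer_faces (ν : R ≃ₐ[k] R) (hν : ∀ r s : R, ε (r * s) = ε (s * ν r))
    (g : (Fin (n + 1) → R) → R) (a : Fin (n + 1) → R) (y : R) :
    cycSum ν (fun b => ε (b 0 * g (fun j => b j.succ))
        + (-1) ^ (n + 1 + 1) * ε (g (fun j => b j.castSucc) * b (Fin.last (n + 1)))) a y
      = ε (twist ν g a * y) - ε (g a * y) := by
  rw [cycSum_add]
  simp only [cycSum]
  rw [Fin.sum_add_sum_eq_of_castSucc_add_succ]
  · rw [cycArr_last_zero, cycArr_last_succ, cycArr_zero_castSucc, cycArr_zero_last,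
      ← ν.apply_symm_apply (g _), ← hν, Even.neg_one_pow,
      neg_one_pow_mul_neg_one_pow_mul (c := 0) (d := 0)]
    · simp [twist, sub_eq_add_neg]
    · simp
    · simpa [Nat.even_mul, Nat.even_add_one] using Nat.even_or_odd n
  · intro i
    have hinit : (fun j : Fin (n + 1) => cycArr ν a y i.succ j.castSucc)
        = fun j => cycArr ν a y i.castSucc j.succ :=
      funext fun j => cycArr_congr _ _ _ (by simp; omega)
    rw [cycArr_castSucc_zero, cycArr_succ_last, hν, hinit,
      neg_one_pow_mul_neg_one_pow_mul (c := (i.val + 1) * (n + 1)) (d := 0)]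
    · simp
    · simp [← Nat.not_even_iff_odd, Nat.even_add, Nat.even_mul, Nat.even_add_one]
      tauto

theorem hdiff_delta_add_delta_hdiff (ν : R ≃ₐ[k] R)
    (hnd : ∀ a : R, (∀ b : R, ε (a * b) = 0) → a = 0) (hν : ∀ r s : R, ε (r * s) = ε (s * ν r))
    {f : (Fin (n + 1) → R) → R} {Df : (Fin n → R) → R} {Ddf : (Fin (n + 1) → R) → R}
    (hDf : IsDeltaOf ε ν f Df) (hDdf : IsDeltaOf ε ν (hdiff f) Ddf) (a : Fin (n + 1) → R) :
    hdiff Df a + Ddf a = twist ν f a - f a := by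
  refine eq_of_forall_eps_mul_eq ε hnd fun y => ?_
  have hDdf_faces : ε (Ddf a * y)
      = cycSum ν (fun b => ε (b 0 * f (fun j => b j.succ))
          + (-1) ^ (n + 1 + 1) * ε (f (fun j => b j.castSucc) * b (Fin.last (n + 1)))) a y
        + cycSum ν (fun b => ∑ q : Fin (n + 1), (-1) ^ (q.val + 1) * ε (f (mergeAt b q))) a y := by
    rw [← cycSum_add, hDdf]
    simp only [cycSum, eps_hdiff]
  rw [add_mul, map_add, eps_hdiff_mul ε ν hν hDf, hDdf_faces, cycSum_outer_faces ε ν hν,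
    cycSum_inner_faces ν (map_mul ν) (fun b => ε (f b)), sub_mul, map_sub]
  ring

end FrobeniusForm

theorem delta_on_invariants_general [Field k] [Ring R] [Algebra k R]
    {n : ℕ} (ε : R →ₗ[k] k)
    (hnd : ∀ a : R, (∀ b : R, ε (a * b) = 0) → a = 0)
    (ν : R ≃ₐ[k] R) (hν : ∀ a b : R, ε (a * b) = ε (b * ν a))
    (f : MultilinearMap k (fun _ : Fin (n + 1) => R) R)
    (hfinv : twist ν (⇑f) = ⇑f)
    (Df : (Fin n → R) → R) (hDf : IsDeltaOf ε (⇑ν) (⇑f) Df)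
    (Ddf : (Fin (n + 1) → R) → R) (hDdf : IsDeltaOf ε (⇑ν) (hdiff (⇑f)) Ddf) :
    twist ν Df = Df ∧ ∀ a : Fin (n + 1) → R, hdiff Df a = - Ddf a := by
  refine ⟨IsDeltaOf.unique ε hnd (hfinv ▸ isDeltaOf_twist ε ν hν hDf) hDf, fun a => ?_⟩
  have h := hdiff_delta_add_delta_hdiff ε ν hnd hν hDf hDdf a
  rw [hfinv, sub_self] at h
  exact eq_neg_of_add_eq_zero_left h

/-- for a `ν`-invariant cochain `f`, the Tradler operator `Δ` again
produces a `ν`-invariant cochain and satisfies `δ(Δf) = −Δ(δf)`; hence `Δ`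
induces a well-defined map `HH^n(R)^{ν↑} → HH^{n-1}(R)^{ν↑}`. -/
theorem delta_on_invariants [Field k] [Ring R] [Algebra k R]
    [FiniteDimensional k R] {n : ℕ} (ε : R →ₗ[k] k)
    (hnd : ∀ a : R, (∀ b : R, ε (a * b) = 0) → a = 0)
    (ν : R ≃ₐ[k] R) (hν : ∀ a b : R, ε (a * b) = ε (b * ν a))
    (f : MultilinearMap k (fun _ : Fin (n + 1) => R) R)
    (hfinv : twist ν (⇑f) = ⇑f)
    (Df : (Fin n → R) → R) (hDf : IsDeltaOf ε (⇑ν) (⇑f) Df)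
    (Ddf : (Fin (n + 1) → R) → R) (hDdf : IsDeltaOf ε (⇑ν) (hdiff (⇑f)) Ddf) :
    twist ν Df = Df ∧ ∀ a : Fin (n + 1) → R, hdiff Df a = - Ddf a :=
  delta_on_invariants_general ε hnd ν hν f hfinv Df hDf Ddf hDdf
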